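/- arXiv:2603.25447 — 2 statements merged into one kernel-verified Lean document; each statement's English description precedes it below -/
import Mathlib

section
/- Let u > 0. Then (4/√π) · ∫₀^u (s² − (3s³)/(2u) + s⁵/(2u³)) · e^{−s²} ds = (2/√π)·∫₀^u e^{−s²} ds − (1/√π)·[ (3/u − 2/u³) − e^{−u²}·(1/u − 2/u³) ]. -/
/-!
Write `Mₙ = ∫₀^u sⁿ e^{-s²} ds`. Differentiating `s^{n+1} e^{-s²}` gives the reduction formula
`M_{n+2} = (n+1)/2 · Mₙ - u^{n+1} e^{-u²}/2`, and `M₁ = (1 - e^{-u²})/2` directly, so the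
integrand's moments `M₂, M₃, M₅` reduce to `M₀ = ∫₀^u e^{-s²} ds` plus boundary terms.
-/

open Real intervalIntegral

noncomputable def gaussianMoment (n : ℕ) (a b : ℝ) : ℝ := ∫ s in a..b, s ^ n * exp (-s ^ 2)

lemma intervalIntegrable_pow_mul_exp_neg_sq (n : ℕ) (a b : ℝ) :
    IntervalIntegrable (fun s : ℝ => s ^ n * exp (-s ^ 2)) MeasureTheory.volume a b :=
  (by fun_prop : Continuous fun s : ℝ => s ^ n * exp (-s ^ 2)).intervalIntegrable a b

lemma hasDerivAt_exp_neg_sq (x : ℝ) :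
    HasDerivAt (fun s : ℝ => exp (-s ^ 2)) (-2 * x * exp (-x ^ 2)) x :=
  (hasDerivAt_pow 2 x).fun_neg.exp.congr_deriv (by push_cast; ring)

lemma hasDerivAt_pow_succ_mul_exp_neg_sq (n : ℕ) (x : ℝ) :
    HasDerivAt (fun s : ℝ => s ^ (n + 1) * exp (-s ^ 2))
      ((n + 1) * (x ^ n * exp (-x ^ 2)) - 2 * (x ^ (n + 2) * exp (-x ^ 2))) x :=
  ((hasDerivAt_pow (n + 1) x).fun_mul (hasDerivAt_exp_neg_sq x)).congr_deriv
    (by rw [Nat.add_sub_cancel]; push_cast; ring)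

lemma gaussianMoment_one (a b : ℝ) :
    gaussianMoment 1 a b = (exp (-a ^ 2) - exp (-b ^ 2)) / 2 := by
  have h := integral_eq_sub_of_hasDerivAt
    (fun x _ => (hasDerivAt_exp_neg_sq x).congr_deriv
      (by ring : _ = -2 * (x ^ 1 * exp (-x ^ 2))))
    ((intervalIntegrable_pow_mul_exp_neg_sq 1 a b).const_mul (-2))
  rw [integral_const_mul] at h
  rw [gaussianMoment]
  linarith

lemma gaussianMoment_add_two (n : ℕ) (a b : ℝ) :
    gaussianMoment (n + 2) a b = (n + 1) / 2 * gaussianMoment n a b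
      - (b ^ (n + 1) * exp (-b ^ 2) - a ^ (n + 1) * exp (-a ^ 2)) / 2 := by
  have hn := (intervalIntegrable_pow_mul_exp_neg_sq n a b).const_mul (n + 1)
  have hn2 := (intervalIntegrable_pow_mul_exp_neg_sq (n + 2) a b).const_mul 2
  have h := integral_eq_sub_of_hasDerivAt
    (fun x _ => hasDerivAt_pow_succ_mul_exp_neg_sq n x) (hn.sub hn2)
  rw [integral_sub hn hn2, integral_const_mul, integral_const_mul] at h
  rw [gaussianMoment, gaussianMoment]
  linarith

/-- Closed form of the Gaussian integral arising in the free-diffusion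
full-FRAP curve. -/
theorem free_diffusion_gaussian_integral (u : ℝ) (hu : 0 < u) :
    (4 / Real.sqrt Real.pi) *
        ∫ s in (0:ℝ)..u,
          (s ^ 2 - 3 * s ^ 3 / (2 * u) + s ^ 5 / (2 * u ^ 3)) * Real.exp (-s ^ 2)
      = (2 / Real.sqrt Real.pi) * (∫ s in (0:ℝ)..u, Real.exp (-s ^ 2))
        - (1 / Real.sqrt Real.pi) *
            ((3 / u - 2 / u ^ 3) - Real.exp (-u ^ 2) * (1 / u - 2 / u ^ 3)) := by
  have hM0 : gaussianMoment 0 0 u = ∫ s in (0:ℝ)..u, Real.exp (-s ^ 2) := by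
    simp [gaussianMoment]
  have hsplit : (∫ s in (0:ℝ)..u,
      (s ^ 2 - 3 * s ^ 3 / (2 * u) + s ^ 5 / (2 * u ^ 3)) * Real.exp (-s ^ 2))
      = gaussianMoment 2 0 u - 3 / (2 * u) * gaussianMoment 3 0 u
        + 1 / (2 * u ^ 3) * gaussianMoment 5 0 u := by
    have hI := intervalIntegrable_pow_mul_exp_neg_sq (a := 0) (b := u)
    rw [gaussianMoment, gaussianMoment, gaussianMoment,
      ← integral_const_mul, ← integral_const_mul, ← integral_sub (hI 2) ((hI 3).const_mul _),
      ← integral_add ((hI 2).sub ((hI 3).const_mul _)) ((hI 5).const_mul _)]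
    congr 1
    ext s
    ring
  rw [hsplit, gaussianMoment_add_two 3, gaussianMoment_add_two 1, gaussianMoment_add_two 0,
    gaussianMoment_one, hM0]
  norm_num
  field_simp
  ring
end

section
/- Let R > 0, D > 0, t > 0, set u = R/√(D·t) and V = 4πR³/3. Then (1/V) · ∫_{B(0,R)} ∫_{B(0,R)} (4πDt)^{−3/2} · exp(−‖x − x'‖²/(4Dt)) dx' dx = erf(u) − (1/√π)·[ (3/u − 2/u³) − e^{−u²}·(1/u − 2/u³) ], where B(0,R) is the ball of radius R in EuclideanSpace ℝ (Fin 3) and erf(u) = (2/√π)∫₀^u e^{−s²} ds. -/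
/-!
Substituting `z = x - x'` turns the double integral of a kernel `K` over the ball `B = B(0, R)`
into `∫ vol (B ∩ (z + B)) K z dz`. Two balls of radius `R` whose centres are `d ≤ 2R` apart
overlap in a lens of volume `π (4R + d) (2R - d)² / 12`, obtained by slicing perpendicular to
the line of centres into discs. Integrating this radial function against the Gaussian in
spherical coordinates and scaling `y = 2 √(D t) s` leaves
`∫₀ᵘ s² (u - s)² (2u + s) e^{-s²} ds`, whose only non-elementary part is `u³ ∫₀ᵘ e^{-s²} ds`.
-/

open MeasureTheory Metric Set Real
open scoped Pointwise

local notation "ℝ³" => EuclideanSpace ℝ (Fin 3)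

section Covariogram

variable {G : Type*} [MeasurableSpace G] [AddCommGroup G] [MeasurableAdd₂ G] [MeasurableNeg G]
  {μ : Measure G} [SFinite μ] [μ.IsAddLeftInvariant] [μ.IsNegInvariant]

theorem integral_integral_sub_eq_integral_measureReal_inter_vadd {s : Set G}
    (hs : MeasurableSet s) (hμs : μ s ≠ ⊤) {K : G → ℝ} (hK : Integrable K μ) :
    ∫ x in s, ∫ y in s, K (x - y) ∂μ ∂μ = ∫ z, μ.real (s ∩ (z +ᵥ s)) * K z ∂μ := by
  classical
  have mem_vadd {x z : G} : x ∈ z +ᵥ s ↔ x - z ∈ s := by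
    rw [mem_vadd_set_iff_neg_vadd_mem, vadd_eq_add, neg_add_eq_sub]
  set S : Set (G × G) := {p | p.1 ∈ s ∧ p.1 - p.2 ∈ s}
  have hS : MeasurableSet S := (hs.preimage measurable_fst).inter (hs.preimage measurable_sub)
  set F : G × G → ℝ := S.indicator fun p => K p.2
  have hF : Integrable F (μ.prod μ) := by
    refine ((integrable_indicator_iff hs).2 (integrableOn_const (C := (1 : ℝ)) hμs)).mul_prod
      hK.norm |>.mono' ((hK.1.comp_snd).indicator hS) (ae_of_all _ fun p => ?_)
    by_cases hp : p ∈ S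
    · simp [F, hp.1, indicator_of_mem hp]
    · simp only [F, indicator_of_notMem hp, norm_zero]
      exact mul_nonneg (indicator_nonneg (fun _ _ => zero_le_one) _) (norm_nonneg _)
  calc ∫ x in s, ∫ y in s, K (x - y) ∂μ ∂μ
      = ∫ x, ∫ z, F (x, z) ∂μ ∂μ := by
        rw [← integral_indicator hs]
        congr 1 with x
        by_cases hx : x ∈ s
        · rw [indicator_of_mem hx, ← integral_indicator hs,
            ← integral_sub_left_eq_self _ μ x]
          congr 1 with z
          simp only [F, S, indicator_apply, mem_ofPred_eq, sub_sub_cancel, hx, true_and]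
        · simp [F, S, hx]
    _ = ∫ z, ∫ x, F (x, z) ∂μ ∂μ := integral_integral_swap hF
    _ = ∫ z, μ.real (s ∩ (z +ᵥ s)) * K z ∂μ := by
        congr 1 with z
        have hsection : (fun x => F (x, z)) = (s ∩ (z +ᵥ s)).indicator fun _ => K z := by
          ext x; simp only [F, S, indicator_apply, mem_ofPred_eq, mem_inter_iff, mem_vadd]
        rw [hsection, integral_indicator_const _ (hs.inter (hs.const_vadd z)), smul_eq_mul]

end Covariogram

theorem volume_ball_zero_inter_ball_eq_of_norm_eq {E : Type*} [NormedAddCommGroup E]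
    [InnerProductSpace ℝ E] [FiniteDimensional ℝ E] [MeasurableSpace E] [BorelSpace E]
    {z w : E} (hzw : ‖z‖ = ‖w‖) (r s : ℝ) :
    volume (ball 0 r ∩ ball z s) = volume (ball 0 r ∩ ball w s) := by
  set e := (Submodule.span ℝ {z - w})ᗮ.reflection
  have hew : e.symm w = z := by
    rw [LinearIsometryEquiv.symm_apply_eq, Submodule.reflection_sub hzw]
  have hpre : e ⁻¹' (ball 0 r ∩ ball w s) = ball 0 r ∩ ball z s := by
    rw [preimage_inter, ← e.coe_toIsometryEquiv, IsometryEquiv.preimage_ball,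
      IsometryEquiv.preimage_ball, LinearIsometryEquiv.coe_symm_toIsometryEquiv, map_zero, hew]
  rw [← hpre, e.measurePreserving.measure_preimage
    (measurableSet_ball.inter measurableSet_ball).nullMeasurableSet]

theorem integrable_exp_neg_sq_norm_div_sq {E : Type*} [NormedAddCommGroup E]
    [InnerProductSpace ℝ E] [FiniteDimensional ℝ E] [MeasurableSpace E] [BorelSpace E]
    {c : ℝ} (hc : c ≠ 0) : Integrable fun v : E => exp (-‖v‖ ^ 2 / c ^ 2) := by
  refine Integrable.of_integral_ne_zero ?_
  have hgauss := GaussianFourier.integral_rexp_neg_mul_sq_norm (V := E)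
    (b := (c ^ 2)⁻¹) (by positivity)
  have hform : ∀ v : E, -‖v‖ ^ 2 / c ^ 2 = -(c ^ 2)⁻¹ * ‖v‖ ^ 2 := fun v => by ring
  simp_rw [hform, hgauss]
  exact (rpow_pos_of_pos (by positivity) _).ne'

theorem volume_setOf_sq_add_sq_lt (c : ℝ) :
    volume {w : Fin 2 → ℝ | w 0 ^ 2 + w 1 ^ 2 < c} = ENNReal.ofReal (π * c) := by
  rcases le_or_gt c 0 with hc | hc
  · have hempty : {w : Fin 2 → ℝ | w 0 ^ 2 + w 1 ^ 2 < c} = ∅ :=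
      eq_empty_of_forall_notMem fun w hw => by
        have : w 0 ^ 2 + w 1 ^ 2 < c := hw
        nlinarith [sq_nonneg (w 0), sq_nonneg (w 1)]
    rw [hempty, measure_empty, ENNReal.ofReal_of_nonpos (by nlinarith [pi_pos])]
  · have hball : WithLp.ofLp ⁻¹' {w : Fin 2 → ℝ | w 0 ^ 2 + w 1 ^ 2 < c} =
        ball (0 : EuclideanSpace ℝ (Fin 2)) √c := by
      rw [EuclideanSpace.ball_zero_eq _ (sqrt_nonneg c), sq_sqrt hc.le]
      simp [Fin.sum_univ_two]
    rw [← (PiLp.volume_preserving_ofLp (Fin 2)).measure_preimage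
      (measurableSet_lt (by fun_prop) (by fun_prop)).nullMeasurableSet, hball,
      EuclideanSpace.volume_ball_fin_two, ← ENNReal.ofReal_pow (sqrt_nonneg c), sq_sqrt hc.le,
      ← ENNReal.ofReal_mul hc.le, mul_comm]

theorem volume_setOf_sq_add_sq_lt_of_measurable {g : ℝ → ℝ} (hg : Measurable g) :
    volume {y : Fin 3 → ℝ | y 1 ^ 2 + y 2 ^ 2 < g (y 0)} = ∫⁻ x, ENNReal.ofReal (π * g x) := by
  set T : Set (ℝ × (Fin 2 → ℝ)) := {p | p.2 0 ^ 2 + p.2 1 ^ 2 < g p.1}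
  have hT : MeasurableSet T := measurableSet_lt (by fun_prop) (hg.comp measurable_fst)
  have hpre : MeasurableEquiv.piFinSuccAbove (fun _ => ℝ) 0 ⁻¹' T =
      {y : Fin 3 → ℝ | y 1 ^ 2 + y 2 ^ 2 < g (y 0)} := rfl
  rw [← hpre, (volume_preserving_piFinSuccAbove (fun _ : Fin 3 => ℝ) 0).measure_preimage
    hT.nullMeasurableSet, Measure.volume_eq_prod, Measure.prod_apply hT]
  exact lintegral_congr fun x => volume_setOf_sq_add_sq_lt (g x)

theorem integral_sq_sub_sq (R a b : ℝ) :
    ∫ x in a..b, (R ^ 2 - x ^ 2) = R ^ 2 * (b - a) - (b ^ 3 - a ^ 3) / 3 := by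
  rw [intervalIntegral.integral_sub intervalIntegrable_const (by simp), integral_pow,
    intervalIntegral.integral_const, smul_eq_mul]
  ring

theorem integral_min_sq_sub_sq {R d : ℝ} (hd : 0 ≤ d) (hdR : d ≤ 2 * R) :
    ∫ x in (d - R)..R, min (R ^ 2 - x ^ 2) (R ^ 2 - (x - d) ^ 2) =
      (4 * R + d) * (2 * R - d) ^ 2 / 12 := by
  have hleft : ∫ x in (d - R)..(d / 2), min (R ^ 2 - x ^ 2) (R ^ 2 - (x - d) ^ 2) =
      ∫ x in (d / 2)..R, (R ^ 2 - x ^ 2) :=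
    calc _ = ∫ x in (d - R)..(d / 2), (R ^ 2 - (d - x) ^ 2) := by
          refine intervalIntegral.integral_congr fun x hx => ?_
          rw [uIcc_of_le (by linarith)] at hx
          rw [min_eq_right (by nlinarith [hx.2]), ← neg_sub d x, neg_sq]
      _ = ∫ x in (d - d / 2)..(d - (d - R)), (R ^ 2 - x ^ 2) :=
          intervalIntegral.integral_comp_sub_left (fun x => R ^ 2 - x ^ 2) d
      _ = _ := by rw [sub_sub_cancel, sub_half]
  have hright : ∫ x in (d / 2)..R, min (R ^ 2 - x ^ 2) (R ^ 2 - (x - d) ^ 2) =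
      ∫ x in (d / 2)..R, (R ^ 2 - x ^ 2) := by
    refine intervalIntegral.integral_congr fun x hx => ?_
    rw [uIcc_of_le (by linarith)] at hx
    exact min_eq_left (by nlinarith [hx.1])
  have hcont : Continuous fun x : ℝ => min (R ^ 2 - x ^ 2) (R ^ 2 - (x - d) ^ 2) := by fun_prop
  rw [← intervalIntegral.integral_add_adjacent_intervals (b := d / 2)
    (hcont.intervalIntegrable _ _) (hcont.intervalIntegrable _ _), hleft, hright,
    integral_sq_sub_sq]
  ring

theorem lintegral_ofReal_pi_mul_min_sq_sub_sq {R d : ℝ} (hd : 0 ≤ d) (hdR : d ≤ 2 * R) :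
    ∫⁻ x, ENNReal.ofReal (π * min (R ^ 2 - x ^ 2) (R ^ 2 - (x - d) ^ 2)) =
      ENNReal.ofReal (π * ((4 * R + d) * (2 * R - d) ^ 2 / 12)) := by
  have hsupp : Function.support (fun x => ENNReal.ofReal (π * min (R ^ 2 - x ^ 2)
      (R ^ 2 - (x - d) ^ 2))) ⊆ Icc (d - R) R := by
    intro x hx
    by_contra hx'
    refine hx (ENNReal.ofReal_of_nonpos (mul_nonpos_of_nonneg_of_nonpos pi_pos.le ?_))
    rw [mem_Icc, not_and_or, not_le, not_le] at hx'
    rcases hx' with h | h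
    · exact (min_le_right _ _).trans (by nlinarith)
    · exact (min_le_left _ _).trans (by nlinarith)
  have hnonneg : ∀ x ∈ Icc (d - R) R, 0 ≤ π * min (R ^ 2 - x ^ 2) (R ^ 2 - (x - d) ^ 2) :=
    fun x ⟨hx₁, hx₂⟩ => mul_nonneg pi_pos.le (le_min (by nlinarith) (by nlinarith))
  rw [← setLIntegral_eq_of_support_subset hsupp, ← ofReal_integral_eq_lintegral_ofReal
    ((Continuous.integrableOn_Icc (by fun_prop)))
    ((ae_restrict_mem measurableSet_Icc).mono hnonneg), integral_const_mul,
    integral_Icc_eq_integral_Ioc, ← intervalIntegral.integral_of_le (by linarith),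
    integral_min_sq_sub_sq hd hdR]

theorem volume_ball_zero_inter_ball_single {R d : ℝ} (hd : 0 ≤ d) (hdR : d ≤ 2 * R) :
    volume (ball (0 : ℝ³) R ∩ ball (EuclideanSpace.single 0 d) R) =
      ENNReal.ofReal (π * ((4 * R + d) * (2 * R - d) ^ 2 / 12)) := by
  have hR : 0 ≤ R := by linarith
  have hpre : ball (0 : ℝ³) R ∩ ball (EuclideanSpace.single 0 d) R =
      WithLp.ofLp ⁻¹' {y : Fin 3 → ℝ | y 1 ^ 2 + y 2 ^ 2 <
        min (R ^ 2 - y 0 ^ 2) (R ^ 2 - (y 0 - d) ^ 2)} := by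
    ext x
    simp only [mem_inter_iff, mem_ball_iff_norm, sub_zero, ← sq_lt_sq₀ (norm_nonneg _) hR,
      EuclideanSpace.norm_sq_eq, Fin.sum_univ_three, mem_preimage, mem_ofPred_eq, lt_min_iff,
      norm_eq_abs, sq_abs, PiLp.sub_apply, PiLp.single_eq_same, ne_eq, one_ne_zero,
      not_false_eq_true, PiLp.single_eq_of_ne, Fin.reduceEq]
    constructor <;> rintro ⟨h1, h2⟩ <;> constructor <;> linarith
  rw [hpre, (PiLp.volume_preserving_ofLp (Fin 3)).measure_preimage
    (measurableSet_lt (by fun_prop) (by fun_prop)).nullMeasurableSet,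
    volume_setOf_sq_add_sq_lt_of_measurable
      (g := fun x => min (R ^ 2 - x ^ 2) (R ^ 2 - (x - d) ^ 2)) (by fun_prop)]
  exact lintegral_ofReal_pi_mul_min_sq_sub_sq hd hdR

noncomputable def lensVolume (R d : ℝ) : ℝ :=
  if d ≤ 2 * R then π * ((4 * R + d) * (2 * R - d) ^ 2 / 12) else 0

theorem measureReal_ball_zero_inter_ball (R : ℝ) (z : ℝ³) :
    volume.real (ball 0 R ∩ ball z R) = lensVolume R ‖z‖ := by
  unfold lensVolume
  split_ifs with h
  · have hR : 0 ≤ R := by linarith [norm_nonneg z]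
    rw [measureReal_def, volume_ball_zero_inter_ball_eq_of_norm_eq
      (w := EuclideanSpace.single 0 ‖z‖) (by simp) R R,
      volume_ball_zero_inter_ball_single (norm_nonneg z) h, ENNReal.toReal_ofReal]
    have : 0 ≤ 4 * R + ‖z‖ := by positivity
    positivity
  · rw [(ball_disjoint_ball (by simpa [← two_mul] using (not_le.1 h).le)).inter_eq,
      measureReal_empty]

theorem integral_ball_integral_ball_eq_integral_lensVolume (R : ℝ) {K : ℝ³ → ℝ}
    (hK : Integrable K) :
    ∫ x in ball 0 R, ∫ y in ball 0 R, K (x - y) = ∫ z, lensVolume R ‖z‖ * K z := by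
  rw [integral_integral_sub_eq_integral_measureReal_inter_vadd measurableSet_ball
    measure_ball_lt_top.ne hK]
  simp_rw [vadd_ball, vadd_eq_add, add_zero, measureReal_ball_zero_inter_ball]

theorem HasDerivAt.mul_exp_neg_sq {P : ℝ → ℝ} {p s : ℝ} (hP : HasDerivAt P p s) :
    HasDerivAt (fun x => P x * Real.exp (-x ^ 2)) ((p - 2 * s * P s) * Real.exp (-s ^ 2)) s := by
  refine (hP.fun_mul (hasDerivAt_pow 2 s).fun_neg.exp).congr_deriv ?_
  push_cast
  ring

theorem integral_sq_mul_sub_sq_mul_exp_neg_sq (u : ℝ) :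
    ∫ s in (0 : ℝ)..u, s ^ 2 * (u - s) ^ 2 * (2 * u + s) * exp (-s ^ 2) =
      u ^ 3 * (∫ s in (0 : ℝ)..u, exp (-s ^ 2)) + 1 - 3 * u ^ 2 / 2 +
        (u ^ 2 / 2 - 1) * exp (-u ^ 2) := by
  set P : ℝ → ℝ := fun s => 3 * u ^ 2 * (1 + s ^ 2) / 2 - u ^ 3 * s - (1 + s ^ 2 + s ^ 4 / 2)
  have hP (s : ℝ) : HasDerivAt (fun s => P s * exp (-s ^ 2))
      (s ^ 2 * (u - s) ^ 2 * (2 * u + s) * exp (-s ^ 2) - u ^ 3 * exp (-s ^ 2)) s := by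
    have h2 := hasDerivAt_pow 2 s
    refine ((((h2.const_add 1).const_mul (3 * u ^ 2)).div_const 2).fun_sub
      ((hasDerivAt_id' s).const_mul (u ^ 3)) |>.fun_sub ((h2.const_add 1).fun_add
      ((hasDerivAt_pow 4 s).div_const 2))).mul_exp_neg_sq.congr_deriv ?_
    push_cast
    ring
  have hint {f : ℝ → ℝ} (hf : Continuous f) : IntervalIntegrable f volume 0 u :=
    hf.intervalIntegrable _ _
  have hftc := intervalIntegral.integral_eq_sub_of_hasDerivAt (fun s _ => hP s)
    (hint (by fun_prop))
  rw [intervalIntegral.integral_sub (hint (by fun_prop)) (hint (by fun_prop)),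
    intervalIntegral.integral_const_mul, sub_eq_iff_eq_add'] at hftc
  rw [hftc]
  simp only [P, ne_eq, OfNat.ofNat_ne_zero, not_false_eq_true, zero_pow, add_zero, mul_one,
    mul_zero, sub_zero, zero_div, neg_zero, exp_zero]
  ring

theorem integral_lensVolume_mul_exp_neg_sq_div_sq {c u : ℝ} (hc : 0 < c) (hu : 0 ≤ u) :
    ∫ z : ℝ³, lensVolume (c * u / 2) ‖z‖ * exp (-‖z‖ ^ 2 / c ^ 2) =
      π ^ 2 * c ^ 6 / 3 * (u ^ 3 * (∫ s in (0 : ℝ)..u, exp (-s ^ 2)) + 1 - 3 * u ^ 2 / 2 +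
        (u ^ 2 / 2 - 1) * exp (-u ^ 2)) := by
  set f : ℝ → ℝ := fun y => y ^ 2 * (lensVolume (c * u / 2) y * exp (-y ^ 2 / c ^ 2))
  have hunit : volume.real (ball (0 : ℝ³) 1) = 4 / 3 * π := by
    rw [measureReal_def, EuclideanSpace.volume_ball_fin_three, ENNReal.ofReal_one, one_pow,
      one_mul, ENNReal.toReal_ofReal (by positivity)]
    ring
  have hsupp : ∫ y in Ioi 0, f y = ∫ y in (c * 0)..(c * u), f y := by
    rw [mul_zero, intervalIntegral.integral_of_le (by positivity),
      setIntegral_eq_of_subset_of_forall_sdiff_eq_zero measurableSet_Ioi Ioc_subset_Ioi_self]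
    rintro y ⟨hy0, hyu⟩
    simp only [mem_Ioc, not_and, not_le] at hyu
    have : 2 * (c * u / 2) = c * u := by ring
    simp only [f, lensVolume, this, if_neg (hyu hy0).not_ge, mul_zero, zero_mul]
  have hscale : EqOn (fun s => f (c * s))
      (fun s => π * c ^ 5 / 12 * (s ^ 2 * (u - s) ^ 2 * (2 * u + s) * exp (-s ^ 2)))
      (uIcc 0 u) := by
    intro s hs
    rw [uIcc_of_le hu] at hs
    have hexp : -(c * s) ^ 2 / c ^ 2 = -s ^ 2 := by field_simp
    simp only [f, lensVolume, hexp, if_pos (show c * s ≤ 2 * (c * u / 2) by nlinarith [hs.2])]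
    ring
  rw [integral_fun_norm_addHaar volume (fun y => lensVolume (c * u / 2) y * exp (-y ^ 2 / c ^ 2)),
    finrank_euclideanSpace_fin, hunit]
  simp only [smul_eq_mul, nsmul_eq_mul]
  rw [hsupp, ← intervalIntegral.smul_integral_comp_mul_left, intervalIntegral.integral_congr hscale,
    intervalIntegral.integral_const_mul, integral_sq_mul_sub_sq_mul_exp_neg_sq, smul_eq_mul]
  push_cast
  ring

/-- Integrated full-FRAP curve for free diffusion: the double average of the
heat kernel over the bleached ball admits a closed form in u = R/√(Dt). -/
theorem full_frap_free_diffusion (R D t : ℝ) (hR : 0 < R) (hD : 0 < D) (ht : 0 < t) :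
    let u : ℝ := R / Real.sqrt (D * t)
    let V : ℝ := 4 * Real.pi * R ^ 3 / 3
    (1 / V) *
        ∫ x in ball (0 : EuclideanSpace ℝ (Fin 3)) R,
          ∫ x' in ball (0 : EuclideanSpace ℝ (Fin 3)) R,
            ((4 * Real.pi * D * t) ^ ((3:ℝ)/2))⁻¹ *
              Real.exp (-‖x - x'‖ ^ 2 / (4 * D * t))
      = (2 / Real.sqrt Real.pi) * (∫ s in (0:ℝ)..u, Real.exp (-s ^ 2))
        - (1 / Real.sqrt Real.pi) *
            ((3 / u - 2 / u ^ 3) - Real.exp (-u ^ 2) * (1 / u - 2 / u ^ 3)) := by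
  intro u V
  have hDt : 0 < D * t := mul_pos hD ht
  set c := 2 * √(D * t)
  have hc : 0 < c := by positivity
  have hu : 0 < u := by positivity
  have hc_sq : 4 * D * t = c ^ 2 := by rw [mul_pow, sq_sqrt hDt.le]; ring
  have hR_eq : R = c * u / 2 := by simp only [u, c]; field_simp
  have hnorm : (4 * π * D * t) ^ ((3 : ℝ) / 2) = π * √π * c ^ 3 := by
    rw [show 4 * π * D * t = (√π * c) ^ 2 by rw [mul_pow, sq_sqrt pi_pos.le, ← hc_sq]; ring,
      rpow_div_two_eq_sqrt _ (sq_nonneg _), sqrt_sq (by positivity), rpow_ofNat]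
    rw [mul_pow, pow_succ, sq_sqrt pi_pos.le]
  have hradial := integral_lensVolume_mul_exp_neg_sq_div_sq hc hu.le
  rw [← hR_eq] at hradial
  simp_rw [integral_const_mul, hc_sq]
  rw [integral_ball_integral_ball_eq_integral_lensVolume R
    (integrable_exp_neg_sq_norm_div_sq hc.ne'), hradial, hnorm,
    show V = π * c ^ 3 * u ^ 3 / 6 by simp only [V, hR_eq]; ring]
  field_simp
  ring
end
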